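/- Let X, Y and G be random variables on a common probability space taking values in finite sets, and assume G is independent of the pair (X, Y). Let Z_T = E_T(X) and Z_G = E_G(X) for arbitrary functions E_T and E_G, and let Z = f(Z_T, Z_G, G) for an arbitrary function f. Then the mutual information I(Z; Y) is bounded by the minimum of I(X; Y) and the conditional mutual information I((Z_T, Z_G); Y | G); that is, I(Z; Y) ≤ I(X; Y) and I(Z; Y) ≤ I((Z_T, Z_G); Y | G). (Theorem 1, graph-conditioned information bound, inequality (9).) -/

import Mathlib

open scoped BigOperators

section InfoTheory

variable {Ω : Type*} [Fintype Ω]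

open Classical in
/-- The probability mass function of the random variable `f` under the weight `w`
(a probability measure on the finite sample space `Ω`). -/
noncomputable def pmfOf {α : Type*} [Fintype α] (w : Ω → ℝ) (f : Ω → α) (a : α) : ℝ :=
  ∑ ω, if f ω = a then w ω else 0

/-- Shannon entropy of a finite-valued random variable (with the convention `0 log 0 = 0`,
which holds automatically since `Real.log 0 = 0`). -/
noncomputable def entropy {α : Type*} [Fintype α] (w : Ω → ℝ) (f : Ω → α) : ℝ :=
  -∑ a, pmfOf w f a * Real.log (pmfOf w f a)

/-- Mutual information `I(f; g) = H(f) + H(g) - H(f, g)`. -/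
noncomputable def mutualInfo {α β : Type*} [Fintype α] [Fintype β]
    (w : Ω → ℝ) (f : Ω → α) (g : Ω → β) : ℝ :=
  entropy w f + entropy w g - entropy w (fun ω => (f ω, g ω))

/-- Conditional mutual information
`I(f; g | h) = H(f, h) + H(g, h) - H(f, g, h) - H(h)`. -/
noncomputable def condMutualInfo {α β γ : Type*} [Fintype α] [Fintype β] [Fintype γ]
    (w : Ω → ℝ) (f : Ω → α) (g : Ω → β) (h : Ω → γ) : ℝ :=
  entropy w (fun ω => (f ω, h ω)) + entropy w (fun ω => (g ω, h ω))
    - entropy w (fun ω => (f ω, g ω, h ω)) - entropy w h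

/-- Independence of two finite-valued random variables: the joint law is
the product of the marginal laws. -/
def IndepRV {α β : Type*} [Fintype α] [Fintype β]
    (w : Ω → ℝ) (f : Ω → α) (g : Ω → β) : Prop :=
  ∀ a b, pmfOf w (fun ω => (f ω, g ω)) (a, b) = pmfOf w f a * pmfOf w g b

end InfoTheory

/-! Both bounds are instances of the data-processing inequality, since `Z` is a function of
`(X, G)` and of `((Z_T, Z_G), G)`. For the first, independence of `G` from `(X, Y)` gives
`I((X, G); Y) = I(X; Y)`; for the second, the chain rule gives
`I(((Z_T, Z_G), G); Y) = I(G; Y) + I((Z_T, Z_G); Y | G)` with `I(G; Y) = 0`.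
The data-processing inequality reduces, by the chain rule, to `I(A; B | C) ≥ 0`, which is
Gibbs' inequality comparing the law of `(A, B, C)` with the law under which `A` and `B` are
conditionally independent given `C` and have the same pair laws with `C`; both have total mass
`∑ w`. -/

open Finset Real

section Entropy

open Classical

variable {Ω α β γ : Type*} [Fintype Ω] [Fintype α] [Fintype β] [Fintype γ]

theorem pmfOf_eq_sum_filter (w : Ω → ℝ) (f : Ω → α) (a : α) :
    pmfOf w f a = ∑ ω with f ω = a, w ω :=
  (sum_filter _ _).symm

theorem pmfOf_nonneg {w : Ω → ℝ} (hw0 : ∀ ω, 0 ≤ w ω) (f : Ω → α) (a : α) :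
    0 ≤ pmfOf w f a := by
  rw [pmfOf_eq_sum_filter]
  exact sum_nonneg fun ω _ => hw0 ω

theorem sum_pmfOf (w : Ω → ℝ) (f : Ω → α) : ∑ a, pmfOf w f a = ∑ ω, w ω := by
  simp only [pmfOf_eq_sum_filter]
  exact sum_fiberwise univ f w

theorem pmfOf_comp (w : Ω → ℝ) (f : Ω → α) (φ : α → β) (b : β) :
    pmfOf w (fun ω => φ (f ω)) b = ∑ a with φ a = b, pmfOf w f a := by
  unfold pmfOf
  rw [sum_comm]
  refine sum_congr rfl fun ω _ => ?_
  rw [sum_filter, Fintype.sum_eq_single (f ω) fun a ha => by simp [Ne.symm ha]]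
  simp

theorem pmfOf_pair (w : Ω → ℝ) (f : Ω → α) (g : Ω → β) (a : α) (b : β) :
    pmfOf w (fun ω => (f ω, g ω)) (a, b) = pmfOf (fun ω => if f ω = a then w ω else 0) g b := by
  unfold pmfOf
  refine sum_congr rfl fun ω _ => ?_
  simp only [Prod.mk.injEq, ite_and]
  split_ifs <;> rfl

theorem sum_pmfOf_pair_left (w : Ω → ℝ) (f : Ω → α) (g : Ω → β) (b : β) :
    ∑ a, pmfOf w (fun ω => (f ω, g ω)) (a, b) = pmfOf w g b := by
  unfold pmfOf
  rw [sum_comm]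
  refine sum_congr rfl fun ω _ => ?_
  simp [Prod.ext_iff, ite_and]

theorem pmfOf_comp_apply_of_injective (w : Ω → ℝ) (f : Ω → α) {φ : α → β}
    (hφ : Function.Injective φ) (a : α) : pmfOf w (fun ω => φ (f ω)) (φ a) = pmfOf w f a := by
  unfold pmfOf
  simp [hφ.eq_iff]

theorem pmfOf_le_pmfOf_comp {w : Ω → ℝ} (hw0 : ∀ ω, 0 ≤ w ω) (f : Ω → α) (φ : α → β) (a : α) :
    pmfOf w f a ≤ pmfOf w (fun ω => φ (f ω)) (φ a) := by
  rw [pmfOf_comp w f φ]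
  exact single_le_sum (fun a' _ => pmfOf_nonneg hw0 f a') (mem_filter.2 ⟨mem_univ a, rfl⟩)

theorem IndepRV.symm {w : Ω → ℝ} {f : Ω → α} {g : Ω → β} (h : IndepRV w f g) :
    IndepRV w g f := by
  intro b a
  rw [mul_comm, ← h a b]
  unfold pmfOf
  simp only [Prod.mk.injEq, and_comm]

theorem IndepRV.comp_right {w : Ω → ℝ} {f : Ω → α} {g : Ω → β} (h : IndepRV w f g)
    (ψ : β → γ) : IndepRV w f (fun ω => ψ (g ω)) := by
  intro a c
  rw [pmfOf_pair, pmfOf_comp _ g ψ, pmfOf_comp w g ψ, mul_sum]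
  refine sum_congr rfl fun b _ => ?_
  rw [← pmfOf_pair, h]

theorem entropy_eq_sum_negMulLog (w : Ω → ℝ) (f : Ω → α) :
    entropy w f = ∑ a, negMulLog (pmfOf w f a) := by
  simp only [entropy, negMulLog, neg_mul, sum_neg_distrib]

theorem entropy_comp (w : Ω → ℝ) (f : Ω → α) (φ : α → β) :
    entropy w (fun ω => φ (f ω)) =
      -∑ a, pmfOf w f a * log (pmfOf w (fun ω => φ (f ω)) (φ a)) := by
  rw [entropy, ← sum_fiberwise univ φ]
  congr 1
  refine sum_congr rfl fun b _ => ?_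
  rw [sum_congr rfl fun a ha => by rw [(mem_filter.1 ha).2], ← sum_mul, ← pmfOf_comp]

theorem entropy_comp_of_injective (w : Ω → ℝ) (f : Ω → α) {φ : α → β}
    (hφ : Function.Injective φ) : entropy w (fun ω => φ (f ω)) = entropy w f := by
  rw [entropy_comp]
  simp only [pmfOf_comp_apply_of_injective w f hφ, entropy]

theorem entropy_pair_of_indep {w : Ω → ℝ} (hw1 : ∑ ω, w ω = 1) {f : Ω → α} {g : Ω → β}
    (h : IndepRV w f g) : entropy w (fun ω => (f ω, g ω)) = entropy w f + entropy w g := by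
  simp only [entropy_eq_sum_negMulLog, Fintype.sum_prod_type, h _ _, negMulLog_mul,
    sum_add_distrib, ← sum_mul, ← mul_sum, sum_pmfOf, hw1, one_mul]

end Entropy

theorem sub_le_mul_log_div {p r : ℝ} (hp : 0 ≤ p) (hr : 0 ≤ r) (hpr : 0 < p → 0 < r) :
    p - r ≤ p * log (p / r) := by
  rcases hp.eq_or_lt with rfl | hp
  · simpa using hr
  have hlog := one_sub_inv_le_log_of_pos (div_pos hp (hpr hp))
  rw [inv_div] at hlog
  calc p - r = p * (1 - r / p) := by field_simp
    _ ≤ p * log (p / r) := mul_le_mul_of_nonneg_left hlog hp.le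

theorem sum_sub_sum_le_sum_mul_log_div {ι : Type*} [Fintype ι] {p r : ι → ℝ}
    (hp : ∀ i, 0 ≤ p i) (hr : ∀ i, 0 ≤ r i) (hpr : ∀ i, 0 < p i → 0 < r i) :
    ∑ i, p i - ∑ i, r i ≤ ∑ i, p i * log (p i / r i) := by
  rw [← sum_sub_distrib]
  exact sum_le_sum fun i _ => sub_le_mul_log_div (hp i) (hr i) (hpr i)

section CondMutualInfo

variable {Ω α β γ : Type*} [Fintype Ω] [Fintype α] [Fintype β] [Fintype γ]

noncomputable def condIndepLaw (w : Ω → ℝ) (A : Ω → α) (B : Ω → β) (C : Ω → γ)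
    (x : α × β × γ) : ℝ :=
  pmfOf w (fun ω => (A ω, C ω)) (x.1, x.2.2) * pmfOf w (fun ω => (B ω, C ω)) (x.2.1, x.2.2) /
    pmfOf w C x.2.2

theorem sum_condIndepLaw (w : Ω → ℝ) (A : Ω → α) (B : Ω → β) (C : Ω → γ) :
    ∑ x, condIndepLaw w A B C x = ∑ ω, w ω := by
  simp only [condIndepLaw, Fintype.sum_prod_type]
  rw [← sum_pmfOf w C, sum_congr rfl fun a _ => sum_comm, sum_comm]
  refine sum_congr rfl fun c _ => ?_
  simp only [← sum_div, ← sum_mul_sum, sum_pmfOf_pair_left, mul_self_div_self]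

theorem condIndepLaw_nonneg {w : Ω → ℝ} (hw0 : ∀ ω, 0 ≤ w ω)
    (A : Ω → α) (B : Ω → β) (C : Ω → γ) (x : α × β × γ) : 0 ≤ condIndepLaw w A B C x :=
  div_nonneg (mul_nonneg (pmfOf_nonneg hw0 _ _) (pmfOf_nonneg hw0 _ _)) (pmfOf_nonneg hw0 _ _)

theorem condIndepLaw_pos {w : Ω → ℝ} (hw0 : ∀ ω, 0 ≤ w ω)
    {A : Ω → α} {B : Ω → β} {C : Ω → γ} {x : α × β × γ}
    (hx : 0 < pmfOf w (fun ω => (A ω, B ω, C ω)) x) : 0 < condIndepLaw w A B C x := by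
  have hAC := hx.trans_le (pmfOf_le_pmfOf_comp hw0 _ (fun y => (y.1, y.2.2)) x)
  have hBC := hx.trans_le (pmfOf_le_pmfOf_comp hw0 _ (fun y => (y.2.1, y.2.2)) x)
  have hC := hx.trans_le (pmfOf_le_pmfOf_comp hw0 _ (fun y => y.2.2) x)
  exact div_pos (mul_pos hAC hBC) hC

theorem condMutualInfo_eq_sum_mul_log_div {w : Ω → ℝ} (hw0 : ∀ ω, 0 ≤ w ω)
    (A : Ω → α) (B : Ω → β) (C : Ω → γ) :
    condMutualInfo w A B C = ∑ x, pmfOf w (fun ω => (A ω, B ω, C ω)) x *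
      log (pmfOf w (fun ω => (A ω, B ω, C ω)) x / condIndepLaw w A B C x) := by
  set J := fun ω => (A ω, B ω, C ω)
  set q := pmfOf w J
  have hAC : entropy w (fun ω => (A ω, C ω)) =
      -∑ x, q x * log (pmfOf w (fun ω => (A ω, C ω)) (x.1, x.2.2)) :=
    entropy_comp w J (fun x => (x.1, x.2.2))
  have hBC : entropy w (fun ω => (B ω, C ω)) =
      -∑ x, q x * log (pmfOf w (fun ω => (B ω, C ω)) (x.2.1, x.2.2)) :=
    entropy_comp w J (fun x => (x.2.1, x.2.2))
  have hC : entropy w C = -∑ x, q x * log (pmfOf w C x.2.2) :=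
    entropy_comp w J (fun x => x.2.2)
  have hterm : ∀ x, q x * log (q x / condIndepLaw w A B C x) =
      q x * log (q x) + q x * log (pmfOf w C x.2.2)
        - q x * log (pmfOf w (fun ω => (A ω, C ω)) (x.1, x.2.2))
        - q x * log (pmfOf w (fun ω => (B ω, C ω)) (x.2.1, x.2.2)) := by
    intro x
    rcases (pmfOf_nonneg hw0 J x).eq_or_lt with hq | hq
    · simp [q, ← hq]
    have hAC := hq.trans_le (pmfOf_le_pmfOf_comp hw0 J (fun y => (y.1, y.2.2)) x)
    have hBC := hq.trans_le (pmfOf_le_pmfOf_comp hw0 J (fun y => (y.2.1, y.2.2)) x)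
    have hC := hq.trans_le (pmfOf_le_pmfOf_comp hw0 J (fun y => y.2.2) x)
    rw [condIndepLaw, log_div hq.ne' (by positivity), log_div (by positivity) hC.ne',
      log_mul hAC.ne' hBC.ne']
    ring
  rw [condMutualInfo, hAC, hBC, hC, entropy, sum_congr rfl fun x _ => hterm x]
  simp only [sum_sub_distrib, sum_add_distrib]
  ring

theorem condMutualInfo_nonneg {w : Ω → ℝ} (hw0 : ∀ ω, 0 ≤ w ω)
    (A : Ω → α) (B : Ω → β) (C : Ω → γ) : 0 ≤ condMutualInfo w A B C := by
  rw [condMutualInfo_eq_sum_mul_log_div hw0]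
  calc (0 : ℝ) = ∑ x, pmfOf w (fun ω => (A ω, B ω, C ω)) x - ∑ x, condIndepLaw w A B C x := by
        rw [sum_pmfOf, sum_condIndepLaw, sub_self]
    _ ≤ _ := sum_sub_sum_le_sum_mul_log_div (pmfOf_nonneg hw0 _) (condIndepLaw_nonneg hw0 A B C)
        fun _ => condIndepLaw_pos hw0

end CondMutualInfo

section MutualInfo

variable {Ω α β γ : Type*} [Fintype Ω] [Fintype α] [Fintype β] [Fintype γ]

theorem mutualInfo_eq_zero_of_indepRV {w : Ω → ℝ} (hw1 : ∑ ω, w ω = 1) {f : Ω → α}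
    {g : Ω → β} (h : IndepRV w f g) : mutualInfo w f g = 0 := by
  rw [mutualInfo, entropy_pair_of_indep hw1 h, sub_self]

theorem mutualInfo_pair_eq_add_condMutualInfo (w : Ω → ℝ) (A : Ω → α) (Y : Ω → β)
    (G : Ω → γ) :
    mutualInfo w (fun ω => (A ω, G ω)) Y = mutualInfo w G Y + condMutualInfo w A Y G := by
  have hAGY : entropy w (fun ω => ((A ω, G ω), Y ω)) = entropy w (fun ω => (A ω, Y ω, G ω)) :=
    entropy_comp_of_injective w (fun ω => (A ω, Y ω, G ω))
      (φ := fun x => ((x.1, x.2.2), x.2.1)) fun _ _ h => by simp_all [Prod.ext_iff]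
  have hGY : entropy w (fun ω => (G ω, Y ω)) = entropy w (fun ω => (Y ω, G ω)) :=
    entropy_comp_of_injective w (fun ω => (Y ω, G ω)) Prod.swap_injective
  rw [mutualInfo, mutualInfo, condMutualInfo, hAGY, hGY]
  ring

theorem mutualInfo_comp_le {w : Ω → ℝ} (hw0 : ∀ ω, 0 ≤ w ω) (W : Ω → α) (Y : Ω → β)
    (φ : α → γ) : mutualInfo w (fun ω => φ (W ω)) Y ≤ mutualInfo w W Y := by
  have hW : entropy w (fun ω => (W ω, φ (W ω))) = entropy w W :=
    entropy_comp_of_injective w W (φ := fun a => (a, φ a)) fun _ _ h => (Prod.ext_iff.1 h).1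
  have hWY : entropy w (fun ω => ((W ω, φ (W ω)), Y ω)) = entropy w (fun ω => (W ω, Y ω)) :=
    entropy_comp_of_injective w (fun ω => (W ω, Y ω)) (φ := fun x => ((x.1, φ x.1), x.2))
      fun _ _ h => by simp_all [Prod.ext_iff]
  have hchain := mutualInfo_pair_eq_add_condMutualInfo w W Y (fun ω => φ (W ω))
  rw [mutualInfo, hW, hWY, ← mutualInfo] at hchain
  linarith [condMutualInfo_nonneg hw0 W Y (fun ω => φ (W ω))]

theorem mutualInfo_pair_eq_of_indepRV {w : Ω → ℝ} (hw1 : ∑ ω, w ω = 1) {X : Ω → α}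
    {Y : Ω → β} {G : Ω → γ} (h : IndepRV w G (fun ω => (X ω, Y ω))) :
    mutualInfo w (fun ω => (X ω, G ω)) Y = mutualInfo w X Y := by
  have hXG : entropy w (fun ω => (X ω, G ω)) = entropy w X + entropy w G :=
    entropy_pair_of_indep hw1 (h.comp_right Prod.fst).symm
  have hXGY : entropy w (fun ω => ((X ω, G ω), Y ω)) =
      entropy w (fun ω => (X ω, Y ω)) + entropy w G := by
    rw [← entropy_pair_of_indep hw1 h.symm]
    exact entropy_comp_of_injective w (fun ω => ((X ω, Y ω), G ω))
      (φ := fun x => ((x.1.1, x.2), x.1.2)) fun _ _ h => by simp_all [Prod.ext_iff]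
  rw [mutualInfo, mutualInfo, hXG, hXGY]
  ring

end MutualInfo

/-- **Theorem 1 (graph-conditioned information bound, inequality (9)).**
If `G` is independent of the pair `(X, Y)`, `Z_T = E_T(X)`, `Z_G = E_G(X)` and
`Z = f(Z_T, Z_G, G)`, then `I(Z; Y) ≤ I(X; Y)` and
`I(Z; Y) ≤ I((Z_T, Z_G); Y | G)`. -/
theorem graph_conditioned_information_bound
    {Ω 𝒳 𝒴 𝒢 T U V : Type*} [Fintype Ω] [Fintype 𝒳] [Fintype 𝒴] [Fintype 𝒢]
    [Fintype T] [Fintype U] [Fintype V]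
    (w : Ω → ℝ) (hw0 : ∀ ω, 0 ≤ w ω) (hw1 : ∑ ω, w ω = 1)
    (X : Ω → 𝒳) (Y : Ω → 𝒴) (G : Ω → 𝒢)
    (hGindep : IndepRV w G (fun ω => (X ω, Y ω)))
    (E_T : 𝒳 → T) (E_G : 𝒳 → U) (f : T × U × 𝒢 → V) :
    mutualInfo w (fun ω => f (E_T (X ω), E_G (X ω), G ω)) Y ≤ mutualInfo w X Y ∧
    mutualInfo w (fun ω => f (E_T (X ω), E_G (X ω), G ω)) Y ≤
      condMutualInfo w (fun ω => (E_T (X ω), E_G (X ω))) Y G := by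
  constructor
  · calc _ ≤ mutualInfo w (fun ω => (X ω, G ω)) Y :=
          mutualInfo_comp_le hw0 (fun ω => (X ω, G ω)) Y fun p => f (E_T p.1, E_G p.1, p.2)
      _ = mutualInfo w X Y := mutualInfo_pair_eq_of_indepRV hw1 hGindep
  · calc _ ≤ mutualInfo w (fun ω => ((E_T (X ω), E_G (X ω)), G ω)) Y :=
          mutualInfo_comp_le hw0 _ Y fun p => f (p.1.1, p.1.2, p.2)
      _ = mutualInfo w G Y + condMutualInfo w (fun ω => (E_T (X ω), E_G (X ω))) Y G :=
          mutualInfo_pair_eq_add_condMutualInfo w _ Y G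
      _ = condMutualInfo w (fun ω => (E_T (X ω), E_G (X ω))) Y G := by
          rw [mutualInfo_eq_zero_of_indepRV hw1 (hGindep.comp_right Prod.snd), zero_add]
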